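/- Let C be a multiset of k ≥ 1 roots of the holomorphic function f = g·h with g(z) = ∏_{α∈C}(z−α), and let m, r satisfy 4k(|m−m_C| + r_C + r)·γ(h,m) ≤ 1. Then M(f,k+1,m,r) ≤ 16e·γ(h,m)·|f_k(m)|, where M(f,k+1,m,r) = sup_{w∈D(m,r)}|f^{(k+1)}(w)/(k+1)!| and f_k = f^{(k)}/k!. -/

import Mathlib

open Complex Metric

def gammaSet (h : ℂ → ℂ) (z : ℂ) : Set ℝ :=
  {x | ∃ k : ℕ, 1 ≤ k ∧ x = ‖iteratedDeriv k h z / ((k.factorial : ℂ) * h z)‖ ^ ((1 : ℝ) / k)}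

/-!
Write `f = g * h` with `g z = ∏_{α ∈ C} (z - α)` and `ρ = |m - m_C| + r_C`. The Taylor coefficients
of the monic polynomial `g` at `w` are elementary symmetric functions of the `w - α`, so
`|g_i(w)| ≤ C(k, i) ρ_w^(k-i)` whenever all roots lie within `ρ_w` of `w`, while `g_k = 1` and
`g_{k+1} = 0`. The definition of `γ` gives `|h_j(m)| ≤ γ^j |h(m)|`, and re-expanding the Taylor
series of `h` about `w ∈ D(m, r)` gives `|h_j(w)| ≤ 2 (2γ)^j |h(m)|`. Leibniz' rule
`f_n = ∑ g_i h_(n-i)` then yields `|f_k(m) - h(m)| ≤ |h(m)| ((1 + γρ)^k - 1) ≤ |h(m)| / 3` and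
`|f_{k+1}(w)| ≤ 4γ |h(m)| (1 + 2γ(ρ + r))^k ≤ 8γ |h(m)|`, so `M(f, k+1, m, r) ≤ 12 γ |f_k(m)|`.
-/

open Finset Polynomial Nat

noncomputable def taylorCoeff (f : ℂ → ℂ) (n : ℕ) (z : ℂ) : ℂ :=
  iteratedDeriv n f z / n !

theorem taylorCoeff_zero (f : ℂ → ℂ) (z : ℂ) : taylorCoeff f 0 z = f z := by
  simp [taylorCoeff]

theorem norm_taylorCoeff (f : ℂ → ℂ) (n : ℕ) (z : ℂ) :
    ‖taylorCoeff f n z‖ = ‖iteratedDeriv n f z‖ / n ! := by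
  rw [taylorCoeff, norm_div, Complex.norm_natCast]

theorem taylorCoeff_mul {f g : ℂ → ℂ} {n : ℕ} {z : ℂ} (hf : ContDiffAt ℂ n f z)
    (hg : ContDiffAt ℂ n g z) :
    taylorCoeff (f * g) n z = ∑ i ∈ range (n + 1), taylorCoeff f i z * taylorCoeff g (n - i) z := by
  rw [taylorCoeff, iteratedDeriv_mul hf hg, Finset.sum_div]
  refine Finset.sum_congr rfl fun i hi => ?_
  rw [taylorCoeff, taylorCoeff, Nat.cast_choose ℂ (Nat.lt_succ_iff.mp (mem_range.mp hi))]
  have := factorial_ne_zero n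
  field_simp

theorem iteratedDeriv_iteratedDeriv (f : ℂ → ℂ) (l j : ℕ) :
    iteratedDeriv l (iteratedDeriv j f) = iteratedDeriv (l + j) f := by
  simp only [iteratedDeriv_eq_iterate, Function.iterate_add_apply]

theorem Polynomial.iteratedDeriv_eval (p : ℂ[X]) (n : ℕ) :
    iteratedDeriv n (fun z => p.eval z) = fun z => (derivative^[n] p).eval z := by
  induction n generalizing p with
  | zero => simp
  | succ n ih =>
    rw [iteratedDeriv_succ', _root_.funext fun z => p.deriv (x := z), ih,
      Function.iterate_succ_apply]

theorem Polynomial.taylorCoeff_eval (p : ℂ[X]) (n : ℕ) (z : ℂ) :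
    taylorCoeff (fun z => p.eval z) n z = (taylor z p).coeff n := by
  rw [taylorCoeff, iteratedDeriv_eval, ← factorial_smul_hasseDeriv, taylor_coeff]
  dsimp only
  rw [LinearMap.smul_apply, eval_smul, nsmul_eq_mul,
    mul_div_cancel_left₀ _ (by exact_mod_cast factorial_ne_zero n)]

theorem Polynomial.taylor_multiset_prod_X_sub_C (s : Multiset ℂ) (w : ℂ) :
    taylor w (s.map fun α => X - C α).prod = (s.map fun α => X + C (w - α)).prod := by
  rw [taylor_apply, multiset_prod_comp, Multiset.map_map]
  refine congrArg _ (Multiset.map_congr rfl fun α _ => ?_)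
  simp only [Function.comp_apply, sub_comp, X_comp, C_comp, map_sub]
  ring

theorem Multiset.prod_map_sub_eq_eval (s : Multiset ℂ) (z : ℂ) :
    (s.map fun α => z - α).prod = ((s.map fun α => X - C α).prod).eval z := by
  rw [eval_multiset_prod, Multiset.map_map]
  exact congrArg _ (Multiset.map_congr rfl fun α _ => by simp)

theorem Multiset.norm_prod_le_pow_card {s : Multiset ℂ} {ρ : ℝ} (hs : ∀ a ∈ s, ‖a‖ ≤ ρ) :
    ‖s.prod‖ ≤ ρ ^ Multiset.card s := by
  rw [show ‖s.prod‖ = (s.map (‖·‖)).prod by simpa using map_multiset_prod (normHom : ℂ →*₀ ℝ) s]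
  exact Multiset.prod_map_le_pow_card (f := normHom) (fun x _ => norm_nonneg x) hs

theorem Multiset.norm_esymm_le {s : Multiset ℂ} {ρ : ℝ} (hs : ∀ a ∈ s, ‖a‖ ≤ ρ) (j : ℕ) :
    ‖s.esymm j‖ ≤ (Multiset.card s).choose j * ρ ^ j := by
  refine (norm_multiset_sum_le _).trans ?_
  rw [Multiset.map_map]
  refine (Multiset.sum_le_card_nsmul _ (ρ ^ j) ?_).trans ?_
  · simp only [Multiset.mem_map, Multiset.mem_powersetCard, Function.comp_apply]
    rintro _ ⟨t, ⟨hts, rfl⟩, rfl⟩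
    exact Multiset.norm_prod_le_pow_card fun a ha => hs a (Multiset.mem_of_le hts ha)
  · simp

section ProdSub

variable (s : Multiset ℂ)

theorem differentiable_multiset_prod_sub :
    Differentiable ℂ fun z => (s.map fun α => z - α).prod := by
  simp_rw [Multiset.prod_map_sub_eq_eval]
  exact Polynomial.differentiable _

variable {s}

theorem taylorCoeff_multiset_prod_sub {i : ℕ} (hi : i ≤ Multiset.card s) (w : ℂ) :
    taylorCoeff (fun z => (s.map fun α => z - α).prod) i w
      = (s.map fun α => w - α).esymm (Multiset.card s - i) := by
  simp only [Multiset.prod_map_sub_eq_eval, taylorCoeff_eval, taylor_multiset_prod_X_sub_C]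
  exact Multiset.prod_X_add_C_coeff' s (w - ·) hi

theorem taylorCoeff_multiset_prod_sub_card (w : ℂ) :
    taylorCoeff (fun z => (s.map fun α => z - α).prod) (Multiset.card s) w = 1 := by
  simp [taylorCoeff_multiset_prod_sub le_rfl, Multiset.esymm, Multiset.powersetCard_zero_left]

theorem taylorCoeff_multiset_prod_sub_of_card_lt {i : ℕ} (hi : Multiset.card s < i) (w : ℂ) :
    taylorCoeff (fun z => (s.map fun α => z - α).prod) i w = 0 := by
  simp only [Multiset.prod_map_sub_eq_eval, taylorCoeff_eval]
  exact coeff_eq_zero_of_natDegree_lt (by simpa using hi)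

theorem norm_taylorCoeff_multiset_prod_sub_le {i : ℕ} (hi : i ≤ Multiset.card s) {w : ℂ}
    {ρ : ℝ} (hρ : ∀ α ∈ s, ‖w - α‖ ≤ ρ) :
    ‖taylorCoeff (fun z => (s.map fun α => z - α).prod) i w‖
      ≤ (Multiset.card s).choose i * ρ ^ (Multiset.card s - i) := by
  rw [taylorCoeff_multiset_prod_sub hi, ← Nat.choose_symm hi]
  simpa using Multiset.norm_esymm_le (s := s.map fun α => w - α) (by simpa using hρ) _

end ProdSub

theorem nonneg_of_mem_upperBounds_gammaSet {h : ℂ → ℂ} {m : ℂ} {γ : ℝ}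
    (hγ : γ ∈ upperBounds (gammaSet h m)) : 0 ≤ γ :=
  (by positivity : (0 : ℝ) ≤ _).trans (hγ ⟨1, le_rfl, rfl⟩)

theorem norm_taylorCoeff_le_of_mem_upperBounds_gammaSet {h : ℂ → ℂ} {m : ℂ} {γ : ℝ}
    (hγ : γ ∈ upperBounds (gammaSet h m)) (hm : h m ≠ 0) (j : ℕ) :
    ‖taylorCoeff h j m‖ ≤ γ ^ j * ‖h m‖ := by
  rcases Nat.eq_zero_or_pos j with rfl | hj
  · simp [taylorCoeff_zero]
  have hroot := hγ ⟨j, hj, rfl⟩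
  rw [one_div, Real.rpow_inv_le_iff_of_pos (norm_nonneg _)
    (nonneg_of_mem_upperBounds_gammaSet hγ) (by exact_mod_cast hj), Real.rpow_natCast,
    ← div_div, norm_div, div_le_iff₀ (norm_pos_iff.mpr hm)] at hroot
  exact hroot

/-- The factor `2` comes from `(l + j)! ≤ 2 ^ (l + j) l! j!` in the re-expanded Taylor series. -/
theorem norm_taylorCoeff_le_of_forall_norm_taylorCoeff_le {h : ℂ → ℂ}
    (hh : Differentiable ℂ h) {m w : ℂ} {A γ : ℝ} (hγ : 0 ≤ γ)
    (hcoef : ∀ n, ‖taylorCoeff h n m‖ ≤ A * γ ^ n) (hw : 2 * γ * ‖w - m‖ < 1) (j : ℕ) :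
    ‖taylorCoeff h j w‖ ≤ A * (2 * γ) ^ j / (1 - 2 * γ * ‖w - m‖) := by
  set q := 2 * γ * ‖w - m‖
  have hq : 0 ≤ q := by positivity
  have hseries := Complex.hasSum_taylorSeries_of_entire
    ((hh.contDiff (n := ⊤)).differentiable_iteratedDeriv j (WithTop.coe_lt_top _)) m w
  simp only [iteratedDeriv_iteratedDeriv] at hseries
  have hterm : ∀ l : ℕ, ‖((l ! : ℂ))⁻¹ • (w - m) ^ l • iteratedDeriv (l + j) h m‖
      ≤ j ! * (A * (2 * γ) ^ j) * q ^ l := by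
    intro l
    have hfac : ((l + j)! : ℝ) ≤ 2 ^ (l + j) * l ! * j ! := by
      rw [← Nat.add_choose_mul_factorial_mul_factorial l j]
      exact_mod_cast by gcongr; exact Nat.choose_le_two_pow _ _
    have hderiv : ‖iteratedDeriv (l + j) h m‖ = (l + j)! * ‖taylorCoeff h (l + j) m‖ := by
      rw [norm_taylorCoeff, mul_div_cancel₀ _ (by positivity)]
    rw [norm_smul, norm_smul, norm_inv, Complex.norm_natCast, norm_pow, hderiv]
    calc (l ! : ℝ)⁻¹ * (‖w - m‖ ^ l * ((l + j)! * ‖taylorCoeff h (l + j) m‖))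
        ≤ (l ! : ℝ)⁻¹ * (‖w - m‖ ^ l * ((2 ^ (l + j) * l ! * j !) * (A * γ ^ (l + j)))) := by
          gcongr
          exact hcoef _
      _ = j ! * (A * (2 * γ) ^ j) * q ^ l := by
          simp only [q]
          field_simp
          ring
  have hbound := hseries.norm_le_of_bounded ((hasSum_geometric_of_lt_one hq hw).mul_left _) hterm
  rw [norm_taylorCoeff, div_le_iff₀ (by positivity)]
  calc ‖iteratedDeriv j h w‖ ≤ j ! * (A * (2 * γ) ^ j) * (1 - q)⁻¹ := hbound
    _ = A * (2 * γ) ^ j / (1 - q) * j ! := by ring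

theorem one_add_pow_eq_sum_range_succ_choose (x : ℝ) (k : ℕ) :
    (1 + x) ^ k = ∑ i ∈ range (k + 1), (k.choose i : ℝ) * x ^ (k - i) := by
  rw [add_pow]
  exact Finset.sum_congr rfl fun i _ => by ring

theorem one_add_pow_sub_one_eq_sum_range_choose (x : ℝ) (k : ℕ) :
    (1 + x) ^ k - 1 = ∑ i ∈ range k, (k.choose i : ℝ) * x ^ (k - i) := by
  simp [one_add_pow_eq_sum_range_succ_choose, sum_range_succ]

theorem one_add_pow_le_exp_mul {x : ℝ} (hx : -1 ≤ x) (k : ℕ) :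
    (1 + x) ^ k ≤ Real.exp (k * x) := by
  rw [Real.exp_nat_mul]
  gcongr
  · linarith
  · linarith [Real.add_one_le_exp x]

theorem norm_taylorCoeff_mul_sub_le {G h : ℂ → ℂ} {k : ℕ} {m : ℂ} {ρ γ : ℝ}
    (hG : ContDiffAt ℂ k G m) (hh : ContDiffAt ℂ k h m) (hGk : taylorCoeff G k m = 1)
    (hGi : ∀ i < k, ‖taylorCoeff G i m‖ ≤ k.choose i * ρ ^ (k - i))
    (hhj : ∀ j, ‖taylorCoeff h j m‖ ≤ γ ^ j * ‖h m‖) :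
    ‖taylorCoeff (G * h) k m - h m‖ ≤ ‖h m‖ * ((1 + γ * ρ) ^ k - 1) := by
  rw [taylorCoeff_mul hG hh, sum_range_succ, hGk, Nat.sub_self, taylorCoeff_zero, one_mul,
    add_sub_cancel_right, one_add_pow_sub_one_eq_sum_range_choose, mul_sum]
  refine (norm_sum_le _ _).trans (sum_le_sum fun i hi => ?_)
  rw [norm_mul, mul_pow]
  calc ‖taylorCoeff G i m‖ * ‖taylorCoeff h (k - i) m‖
      ≤ (k.choose i * ρ ^ (k - i)) * (γ ^ (k - i) * ‖h m‖) :=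
        mul_le_mul (hGi i (mem_range.mp hi)) (hhj _) (norm_nonneg _)
          ((norm_nonneg _).trans (hGi i (mem_range.mp hi)))
    _ = _ := by ring

theorem norm_taylorCoeff_mul_succ_le {G h : ℂ → ℂ} {k : ℕ} {w : ℂ} {ρ x B : ℝ}
    (hG : ContDiffAt ℂ (k + 1) G w) (hh : ContDiffAt ℂ (k + 1) h w)
    (hGk : taylorCoeff G (k + 1) w = 0)
    (hGi : ∀ i ≤ k, ‖taylorCoeff G i w‖ ≤ k.choose i * ρ ^ (k - i))
    (hhj : ∀ j, ‖taylorCoeff h j w‖ ≤ B * x ^ j) :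
    ‖taylorCoeff (G * h) (k + 1) w‖ ≤ B * x * (1 + x * ρ) ^ k := by
  rw [taylorCoeff_mul hG hh, sum_range_succ, hGk, zero_mul, add_zero,
    one_add_pow_eq_sum_range_succ_choose, mul_sum]
  refine (norm_sum_le _ _).trans (sum_le_sum fun i hi => ?_)
  have hik : i ≤ k := Nat.lt_succ_iff.mp (mem_range.mp hi)
  rw [norm_mul, mul_pow, show k + 1 - i = k - i + 1 by omega]
  calc ‖taylorCoeff G i w‖ * ‖taylorCoeff h (k - i + 1) w‖
      ≤ (k.choose i * ρ ^ (k - i)) * (B * x ^ (k - i + 1)) :=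
        mul_le_mul (hGi i hik) (hhj _) (norm_nonneg _) ((norm_nonneg _).trans (hGi i hik))
    _ = _ := by ring

theorem norm_le_three_halves_mul_norm_taylorCoeff_card {s : Multiset ℂ} {h : ℂ → ℂ}
    (hh : Differentiable ℂ h) {m : ℂ} {γ ρ : ℝ} (hγ : γ ∈ upperBounds (gammaSet h m))
    (hm : h m ≠ 0) (hρ : ∀ α ∈ s, ‖m - α‖ ≤ ρ) (hγρ : 0 ≤ γ * ρ)
    (hsmall : 4 * Multiset.card s * (γ * ρ) ≤ 1) :
    ‖h m‖ ≤ 3 / 2 *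
      ‖taylorCoeff ((fun z => (s.map fun α => z - α).prod) * h) (Multiset.card s) m‖ := by
  have hclose := norm_taylorCoeff_mul_sub_le
    (differentiable_multiset_prod_sub s).contDiff.contDiffAt hh.contDiff.contDiffAt
    (taylorCoeff_multiset_prod_sub_card m)
    (fun i hi => norm_taylorCoeff_multiset_prod_sub_le hi.le hρ)
    (norm_taylorCoeff_le_of_mem_upperBounds_gammaSet hγ hm)
  have hexp : (1 + γ * ρ) ^ Multiset.card s ≤ 4 / 3 := calc
    _ ≤ Real.exp (Multiset.card s * (γ * ρ)) := one_add_pow_le_exp_mul (by linarith) _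
    _ ≤ Real.exp (1 / 4) := Real.exp_le_exp.mpr (by linarith)
    _ ≤ 1 / (1 - 1 / 4) := Real.exp_bound_div_one_sub_of_interval (by norm_num) (by norm_num)
    _ = 4 / 3 := by norm_num
  have hrev := norm_sub_norm_le (h m)
    (taylorCoeff ((fun z => (s.map fun α => z - α).prod) * h) (Multiset.card s) m)
  rw [norm_sub_rev] at hrev
  nlinarith [norm_nonneg (h m)]

theorem norm_taylorCoeff_card_succ_le {s : Multiset ℂ} {h : ℂ → ℂ}
    (hh : Differentiable ℂ h) {m w : ℂ} {γ ρ : ℝ} (hγ : 0 ≤ γ)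
    (hcoef : ∀ j, ‖taylorCoeff h j m‖ ≤ γ ^ j * ‖h m‖) (hρ : ∀ α ∈ s, ‖w - α‖ ≤ ρ)
    (hρ0 : 0 ≤ ρ) (hwm : 4 * γ * ‖w - m‖ ≤ 1) (hsmall : 4 * Multiset.card s * (γ * ρ) ≤ 1) :
    ‖taylorCoeff ((fun z => (s.map fun α => z - α).prod) * h) (Multiset.card s + 1) w‖
      ≤ 8 * γ * ‖h m‖ := by
  have hshift : ∀ j, ‖taylorCoeff h j w‖ ≤ 2 * ‖h m‖ * (2 * γ) ^ j := fun j => calc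
    _ ≤ ‖h m‖ * (2 * γ) ^ j / (1 - 2 * γ * ‖w - m‖) :=
      norm_taylorCoeff_le_of_forall_norm_taylorCoeff_le hh hγ
        (fun n => (hcoef n).trans_eq (mul_comm _ _)) (by linarith) j
    _ ≤ ‖h m‖ * (2 * γ) ^ j / (1 / 2) := by gcongr; linarith
    _ = 2 * ‖h m‖ * (2 * γ) ^ j := by ring
  have hexp : (1 + 2 * γ * ρ) ^ Multiset.card s ≤ 2 := calc
    _ ≤ Real.exp (Multiset.card s * (2 * γ * ρ)) := one_add_pow_le_exp_mul (by nlinarith) _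
    _ ≤ Real.exp (1 / 2) := Real.exp_le_exp.mpr (by linarith)
    _ ≤ 1 / (1 - 1 / 2) := Real.exp_bound_div_one_sub_of_interval (by norm_num) (by norm_num)
    _ = 2 := by norm_num
  calc _ ≤ 2 * ‖h m‖ * (2 * γ) * (1 + 2 * γ * ρ) ^ Multiset.card s :=
        norm_taylorCoeff_mul_succ_le (differentiable_multiset_prod_sub s).contDiff.contDiffAt
          hh.contDiff.contDiffAt
          (taylorCoeff_multiset_prod_sub_of_card_lt (Nat.lt_succ_self _) w)
          (fun i hi => norm_taylorCoeff_multiset_prod_sub_le hi hρ) hshift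
    _ ≤ 2 * ‖h m‖ * (2 * γ) * 2 := by gcongr
    _ = 8 * γ * ‖h m‖ := by ring

theorem stmt6_general (C : Multiset ℂ) (k : ℕ) (hk : 1 ≤ k) (hcard : Multiset.card C = k)
    (mC : ℂ)
    (rC : ℝ) (hrC : ∀ α ∈ C, ‖α - mC‖ ≤ rC)
    (h f : ℂ → ℂ) (hdiff : Differentiable ℂ h)
    (hf : ∀ w, f w = (C.map (fun α => w - α)).prod * h w)
    (m : ℂ) (r : ℝ) (hr : 0 ≤ r) (hm : h m ≠ 0)
    (γ : ℝ) (hγ : IsLUB (gammaSet h m) γ)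
    (hcond : 4 * k * (‖m - mC‖ + rC + r) * γ ≤ 1) :
    sSup ((fun w => ‖iteratedDeriv (k+1) f w‖ / (k+1).factorial) '' closedBall m r) ≤
      16 * Real.exp 1 * γ * ‖iteratedDeriv k f m / (k.factorial : ℂ)‖ := by
  subst hcard
  obtain rfl : f = (fun z => (C.map fun α => z - α).prod) * h := funext hf
  have hγ0 := nonneg_of_mem_upperBounds_gammaSet hγ.1
  have hcoef := norm_taylorCoeff_le_of_mem_upperBounds_gammaSet hγ.1 hm
  obtain ⟨α₀, hα₀⟩ := Multiset.card_pos_iff_exists_mem.mp hk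
  set ρ := ‖m - mC‖ + rC
  have hρ : 0 ≤ ρ := add_nonneg (norm_nonneg _) ((norm_nonneg _).trans (hrC α₀ hα₀))
  have hroots : ∀ w, ∀ α ∈ C, ‖w - α‖ ≤ ‖w - m‖ + ρ := fun w α hα => by
    linarith [norm_sub_le_norm_sub_add_norm_sub w m α, norm_sub_le_norm_sub_add_norm_sub m mC α,
      norm_sub_rev mC α, hrC α hα]
  have hk1 : (1 : ℝ) ≤ Multiset.card C := by exact_mod_cast hk
  have hsmall : 4 * Multiset.card C * (γ * (ρ + r)) ≤ 1 := by linarith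
  have hγρ : 4 * Multiset.card C * (γ * ρ) ≤ 1 := by nlinarith [mul_nonneg hγ0 hr]
  have hγr : 4 * γ * r ≤ 1 := by nlinarith [mul_nonneg hγ0 hρ, mul_nonneg hγ0 hr]
  have hlower := norm_le_three_halves_mul_norm_taylorCoeff_card hdiff hγ.1 hm
    (by simpa using hroots m) (mul_nonneg hγ0 hρ) hγρ
  refine Real.sSup_le ?_ (by positivity)
  rintro _ ⟨w, hw, rfl⟩
  have hwm : ‖w - m‖ ≤ r := mem_closedBall_iff_norm.mp hw
  have hupper := norm_taylorCoeff_card_succ_le hdiff hγ0 hcoef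
    (fun α hα => (hroots w α hα).trans (by linarith : _ ≤ ρ + r)) (by positivity)
    (by nlinarith) (by linarith)
  dsimp only
  rw [← norm_taylorCoeff]
  calc _ ≤ 8 * γ * ‖h m‖ := hupper
    _ ≤ 8 * γ * (3 / 2 * ‖taylorCoeff _ _ m‖) := by gcongr
    _ = 12 * γ * ‖taylorCoeff _ _ m‖ := by ring
    _ ≤ 16 * Real.exp 1 * γ * ‖taylorCoeff _ _ m‖ := by
      gcongr
      linarith [Real.one_le_exp zero_le_one]

theorem stmt6 (C : Multiset ℂ) (k : ℕ) (hk : 1 ≤ k) (hcard : Multiset.card C = k)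
    (mC : ℂ) (hmC : mC = C.sum / (k : ℂ))
    (rC : ℝ) (hrC : ∀ α ∈ C, ‖α - mC‖ ≤ rC)
    (h f : ℂ → ℂ) (hdiff : Differentiable ℂ h)
    (hf : ∀ w, f w = (C.map (fun α => w - α)).prod * h w)
    (m : ℂ) (r : ℝ) (hr : 0 ≤ r) (hm : h m ≠ 0)
    (hnv : ∀ w ∈ closedBall m r, h w ≠ 0)
    (γ : ℝ) (hγ : IsLUB (gammaSet h m) γ)
    (hcond : 4 * k * (‖m - mC‖ + rC + r) * γ ≤ 1) :
    sSup ((fun w => ‖iteratedDeriv (k+1) f w‖ / (k+1).factorial) '' closedBall m r) ≤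
      16 * Real.exp 1 * γ * ‖iteratedDeriv k f m / (k.factorial : ℂ)‖ :=
  stmt6_general C k hk hcard mC rC hrC h f hdiff hf m r hr hm γ hγ hcond
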